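/- (Theorem 1, deterministic part.) Let N, N₁, N₂, K be positive integers with N₁ + N₂ = N + 1 and K ≤ min(N₁ − 1, N₂). Let z₁,…,z_K ∈ ℂ be pairwise distinct with |z_k| = 1, let s₁,…,s_K ∈ ℂ be all nonzero, and let y ∈ ℂ^N with y_j = Σ_{k=1}^K s_k · z_k^{j−1}. Then the double Hankel matrix D(y) = [H(y) | J_{N₁}·conj(H(y))·J_{N₂}] has rank exactly K, and its column space equals the column space of the Vandermonde matrix A_{N₁}(z). -/

import Mathlib

open Matrix

/-- The `N₁ × N₂` Hankel matrix of a signal `y ∈ ℂ^N`, where `N₁ + N₂ = N + 1`. -/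
noncomputable def hankelM {N : ℕ} (N₁ N₂ : ℕ) (h : N₁ + N₂ = N + 1) (y : Fin N → ℂ) :
    Matrix (Fin N₁) (Fin N₂) ℂ :=
  fun j l => y ⟨j.1 + l.1, by have := j.2; have := l.2; omega⟩

/-- The `m × K` Vandermonde matrix with nodes `z`. -/
noncomputable def vandM (m : ℕ) {K : ℕ} (z : Fin K → ℂ) : Matrix (Fin m) (Fin K) ℂ :=
  fun n k => z k ^ (n : ℕ)

/-- The `m × m` reversal matrix `J_m`, with ones on the anti-diagonal. -/
noncomputable def revM (m : ℕ) : Matrix (Fin m) (Fin m) ℂ :=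
  fun i j => if i.1 + j.1 + 1 = m then 1 else 0

/-- The double Hankel matrix `D(y) = [H(y) | J_{N₁} ⬝ conj(H(y)) ⬝ J_{N₂}]`. -/
noncomputable def dHankel {N : ℕ} (N₁ N₂ : ℕ) (h : N₁ + N₂ = N + 1) (y : Fin N → ℂ) :
    Matrix (Fin N₁) (Fin N₂ ⊕ Fin N₂) ℂ :=
  Matrix.fromCols (hankelM N₁ N₂ h y)
    (revM N₁ * (hankelM N₁ N₂ h y).map (starRingEnd ℂ) * revM N₂)

/-! Writing `y_j = ∑ₖ sₖ zₖ ^ j` and using `conj zₖ = zₖ⁻¹`, both blocks of `D(y)` factor through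
the Vandermonde matrix: `D(y) = A_{N₁}(z) B`, where the left block of the `K × 2N₂` matrix `B` is
`diag(s) A_{N₂}(z)ᵀ`. As the nodes are distinct and `K ≤ N₂`, `B` is onto, so `D(y)` and
`A_{N₁}(z)` have the same column space, which has dimension `K` because `K ≤ N₁`. -/

lemma vandM_mulVecLin_injective {K m : ℕ} (hKm : K ≤ m) {z : Fin K → ℂ}
    (hz : Function.Injective z) : Function.Injective (vandM m z).mulVecLin := by
  rw [← LinearMap.ker_eq_bot, LinearMap.ker_eq_bot']
  intro x hx
  -- the first `K` rows of `vandM m z` form the invertible square Vandermonde matrix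
  have hsq : (vandermonde z)ᵀ *ᵥ x = 0 := by
    ext i
    simpa [mulVec, vandermonde, vandM, dotProduct] using
      congrFun hx ⟨i.1, lt_of_lt_of_le i.2 hKm⟩
  have hdet : IsUnit (vandermonde z)ᵀ.det := by
    rw [det_transpose]
    exact (det_vandermonde_ne_zero_iff.2 hz).isUnit
  simpa [mulVec_mulVec, nonsing_inv_mul _ hdet] using
    congrArg (((vandermonde z)ᵀ)⁻¹ *ᵥ ·) hsq

lemma rank_vandM {K m : ℕ} (hKm : K ≤ m) {z : Fin K → ℂ} (hz : Function.Injective z) :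
    (vandM m z).rank = K := by
  rw [rank, LinearMap.finrank_range_of_inj (vandM_mulVecLin_injective hKm hz),
    Module.finrank_fin_fun]

lemma vandM_transpose_mulVecLin_surjective {K m : ℕ} (hKm : K ≤ m) {z : Fin K → ℂ}
    (hz : Function.Injective z) : Function.Surjective (vandM m z)ᵀ.mulVecLin := by
  rw [← LinearMap.range_eq_top]
  apply Submodule.eq_top_of_finrank_eq
  rw [← rank, rank_transpose, rank_vandM hKm hz, Module.finrank_fin_fun]

lemma revM_mul_apply {m n : ℕ} (X : Matrix (Fin m) (Fin n) ℂ) (i : Fin m) (j : Fin n) :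
    (revM m * X) i j = X ⟨m - 1 - i, by omega⟩ j := by
  rw [mul_apply, Finset.sum_eq_single ⟨m - 1 - i, by omega⟩]
  · simp [revM]
    omega
  · intro b _ hb
    have : i.1 + b.1 + 1 ≠ m := fun hc => hb (Fin.ext (by simp; omega))
    simp [revM, this]
  · simp

lemma mul_revM_apply {m n : ℕ} (X : Matrix (Fin m) (Fin n) ℂ) (i : Fin m) (j : Fin n) :
    (X * revM n) i j = X i ⟨n - 1 - j, by omega⟩ := by
  rw [mul_apply, Finset.sum_eq_single ⟨n - 1 - j, by omega⟩]
  · simp [revM]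
    omega
  · intro b _ hb
    have : b.1 + j.1 + 1 ≠ n := fun hc => hb (Fin.ext (by simp; omega))
    simp [revM, this]
  · simp

lemma pow_sub_eq_pow_mul_pow_of_mul_eq_one {M : Type*} [CommMonoid M] {a b : M}
    (hab : a * b = 1) {m n : ℕ} (hmn : m ≤ n) : a ^ (n - m) = a ^ n * b ^ m := by
  conv_rhs => rw [← Nat.sub_add_cancel hmn, pow_add, mul_assoc, ← mul_pow, hab, one_pow, mul_one]

lemma range_mulVecLin_mul_of_surjective {R m n o : Type*} [CommSemiring R] [Fintype n]
    [Fintype o] (A : Matrix m n R) {B : Matrix n o R} (hB : Function.Surjective B.mulVecLin) :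
    LinearMap.range (A * B).mulVecLin = LinearMap.range A.mulVecLin := by
  rw [mulVecLin_mul]
  exact LinearMap.range_comp_of_range_eq_top _ (LinearMap.range_eq_top.2 hB)

noncomputable def dHankelCoeff {K : ℕ} (N N₂ : ℕ) (z s : Fin K → ℂ) :
    Matrix (Fin K) (Fin N₂ ⊕ Fin N₂) ℂ :=
  fromCols (of fun k l => s k * z k ^ (l : ℕ))
    (of fun k l => starRingEnd ℂ (s k) * starRingEnd ℂ (z k) ^ (N - 1) * z k ^ (l : ℕ))

lemma dHankel_eq_vandM_mul_dHankelCoeff {N N₁ N₂ K : ℕ} (h : N₁ + N₂ = N + 1)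
    {z : Fin K → ℂ} (hzu : ∀ k, ‖z k‖ = 1) (s : Fin K → ℂ) {y : Fin N → ℂ}
    (hy : ∀ j : Fin N, y j = ∑ k, s k * z k ^ (j : ℕ)) :
    dHankel N₁ N₂ h y = vandM N₁ z * dHankelCoeff N N₂ z s := by
  ext j (l | l)
  · simp only [dHankel, fromCols_apply_inl, hankelM, hy, mul_apply, vandM, dHankelCoeff, of_apply]
    refine Finset.sum_congr rfl fun k _ => ?_
    rw [pow_add]
    ring
  · rw [dHankel, fromCols_apply_inr, mul_revM_apply, revM_mul_apply]
    simp only [map_apply, hankelM, hy, map_sum, mul_apply, vandM, dHankelCoeff, fromCols_apply_inr,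
      of_apply]
    refine Finset.sum_congr rfl fun k _ => ?_
    -- `conj zₖ = zₖ⁻¹` turns the reversed, conjugated entry back into powers of `zₖ`
    have hconj : starRingEnd ℂ (z k) * z k = 1 := by
      rw [Complex.conj_mul', hzu k]
      norm_num
    have hidx : N₁ - 1 - j + (N₂ - 1 - l) = N - 1 - (j + l) := by omega
    rw [hidx, map_mul, map_pow, pow_sub_eq_pow_mul_pow_of_mul_eq_one hconj (by omega), pow_add]
    ring

lemma dHankelCoeff_mulVecLin_surjective {N N₂ K : ℕ} (hKN : K ≤ N₂) {z : Fin K → ℂ}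
    (hz : Function.Injective z) {s : Fin K → ℂ} (hs : ∀ k, s k ≠ 0) :
    Function.Surjective (dHankelCoeff N N₂ z s).mulVecLin := by
  intro u
  obtain ⟨v, hv⟩ := vandM_transpose_mulVecLin_surjective hKN hz fun k => u k / s k
  refine ⟨Sum.elim v 0, funext fun k => ?_⟩
  have hvk := congrFun hv k
  simp only [mulVecLin_apply, mulVec, dotProduct, transpose_apply, vandM] at hvk ⊢
  simp only [Fintype.sum_sum_type, dHankelCoeff, fromCols_apply_inl, fromCols_apply_inr, of_apply,
    Sum.elim_inl, Sum.elim_inr, Pi.zero_apply, mul_zero, Finset.sum_const_zero, add_zero]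
  simp_rw [mul_assoc, ← Finset.mul_sum, hvk, mul_div_cancel₀ _ (hs k)]

theorem statement10_general (N N₁ N₂ K : ℕ)
    (h : N₁ + N₂ = N + 1) (hK1 : K ≤ N₁ - 1) (hK2 : K ≤ N₂)
    (z : Fin K → ℂ) (hz : Function.Injective z) (hzu : ∀ k, ‖z k‖ = 1)
    (s : Fin K → ℂ) (hs : ∀ k, s k ≠ 0)
    (y : Fin N → ℂ) (hy : ∀ j : Fin N, y j = ∑ k, s k * z k ^ (j : ℕ)) :
    (dHankel N₁ N₂ h y).rank = K ∧
      LinearMap.range (dHankel N₁ N₂ h y).mulVecLin =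
        LinearMap.range (vandM N₁ z).mulVecLin := by
  have hrange : LinearMap.range (dHankel N₁ N₂ h y).mulVecLin =
      LinearMap.range (vandM N₁ z).mulVecLin := by
    rw [dHankel_eq_vandM_mul_dHankelCoeff h hzu s hy]
    exact range_mulVecLin_mul_of_surjective _ (dHankelCoeff_mulVecLin_surjective hK2 hz hs)
  refine ⟨?_, hrange⟩
  rw [rank, hrange, ← rank, rank_vandM (by omega) hz]

theorem statement10 (N N₁ N₂ K : ℕ) (hN : 0 < N) (hN₁ : 0 < N₁) (hN₂ : 0 < N₂) (hK : 0 < K)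
    (h : N₁ + N₂ = N + 1) (hK1 : K ≤ N₁ - 1) (hK2 : K ≤ N₂)
    (z : Fin K → ℂ) (hz : Function.Injective z) (hzu : ∀ k, ‖z k‖ = 1)
    (s : Fin K → ℂ) (hs : ∀ k, s k ≠ 0)
    (y : Fin N → ℂ) (hy : ∀ j : Fin N, y j = ∑ k, s k * z k ^ (j : ℕ)) :
    (dHankel N₁ N₂ h y).rank = K ∧
      LinearMap.range (dHankel N₁ N₂ h y).mulVecLin =
        LinearMap.range (vandM N₁ z).mulVecLin :=
  statement10_general N N₁ N₂ K h hK1 hK2 z hz hzu s hs y hy
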